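/- Let V be a finitely generated free abelian group (a finitely generated free ℤ-module) equipped with an endomorphism ∂ : V → V satisfying ∂ ∘ ∂ = 0. Let z ∈ V be an element with ∂ z = 0 such that for every nonzero integer a the element a·z does not lie in the image of ∂ (i.e., the induced map ℤ → ker ∂ / im ∂, a ↦ a·[z], is injective). Let w : V → ℤ be a ℤ-linear map with w ∘ ∂ = 0 and w(z) = 0, and suppose there exists v ∈ V with ∂ v = 0 and w(v) = 1 (i.e., the induced map ker ∂ / im ∂ → ℤ is surjective). Define the total complex T = ℤ × V × ℤ with differential D(a, v, b) = (0, a·z + ∂ v, w(v)); then D ∘ D = 0, and the rank of the homology of (T, D) satisfies: rank(ker D) − rank(range D) = (rank(ker ∂) − rank(range ∂)) − 2. -/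

import Mathlib

/-!
By rank–nullity, a differential `f` on a module of finite rank has homology of rank
`rank M - 2 rank (im f)`. The cone `ℤ × V × ℤ` has rank `rank V + 2`, so everything reduces to
`rank (im D) = rank (im d) + 2`. In fact `im D = 0 × (ℤ z + im d) × ℤ`: a cycle `v` with `w v = 1`
lets one correct the last coordinate without changing the middle one, and `ℤ z` is a copy of `ℤ`
meeting `im d` trivially because no nonzero multiple of `z` is a boundary.
-/

open Module LinearMap Submodule

section Rank

variable {R M N : Type*} [CommRing R] [IsDomain R]
  [AddCommGroup M] [Module R M] [AddCommGroup N] [Module R N]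

theorem LinearMap.finrank_range_add_finrank_ker_of_isDomain [Module.Finite R M]
    (f : M →ₗ[R] N) : finrank R (range f) + finrank R (ker f) = finrank R M := by
  rw [← f.quotKerEquivRange.finrank_eq]
  exact (ker f).finrank_quotient_add_finrank

theorem LinearMap.finrank_ker_sub_finrank_range [Module.Finite R M] (f : M →ₗ[R] M) :
    (finrank R (ker f) : ℤ) - finrank R (range f) = finrank R M - 2 * finrank R (range f) := by
  have := f.finrank_range_add_finrank_ker_of_isDomain
  omega

theorem Module.finrank_prod_of_isDomain [Module.Finite R M] [Module.Finite R N] :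
    finrank R (M × N) = finrank R M + finrank R N := by
  rw [← (LinearMap.fst R M N).finrank_range_add_finrank_ker_of_isDomain, range_fst, finrank_top,
    ker_fst, finrank_range_of_inj inr_injective]

variable [IsNoetherianRing R] [Module.Finite R M] [Module.Finite R N]

theorem Submodule.finrank_prod (p : Submodule R M) (q : Submodule R N) :
    finrank R (p.prod q) = finrank R p + finrank R q := by
  have := finrank_range_of_inj (f := p.subtype.prodMap q.subtype)
    (p.injective_subtype.prodMap q.injective_subtype)
  rwa [range_prodMap, range_subtype, range_subtype, finrank_prod_of_isDomain] at this

theorem Submodule.finrank_sup_add_finrank_inf_eq_of_isDomain (s t : Submodule R M) :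
    finrank R ↥(s ⊔ t) + finrank R ↥(s ⊓ t) = finrank R s + finrank R t := by
  have := s.rank_sup_add_rank_inf_eq t
  simp only [← finrank_eq_rank] at this
  exact_mod_cast this

theorem Submodule.finrank_span_singleton_sup {z : M} {p : Submodule R M}
    (hz : ∀ a : R, a ≠ 0 → a • z ∉ p) : finrank R ↥(R ∙ z ⊔ p) = finrank R p + 1 := by
  have hdisj : R ∙ z ⊓ p = ⊥ := by
    refine eq_bot_iff.2 fun x ⟨hxz, hxp⟩ ↦ ?_
    obtain ⟨a, rfl⟩ := mem_span_singleton.1 hxz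
    by_contra ha
    exact hz a (fun h ↦ ha (by simp [h])) hxp
  have hinj : Function.Injective (toSpanSingleton R M z) := by
    refine (injective_iff_map_eq_zero _).2 fun a ha ↦ ?_
    by_contra ha0
    exact hz a ha0 (by simp only [toSpanSingleton_apply] at ha; simp [ha])
  have hz1 : finrank R (R ∙ z) = 1 := by
    rw [← range_toSpanSingleton, finrank_range_of_inj hinj, finrank_self]
  have := (R ∙ z).finrank_sup_add_finrank_inf_eq_of_isDomain p
  rw [hdisj, finrank_bot, hz1] at this
  omega

end Rank

namespace MappingCone

section

variable {R V : Type*} [Ring R] [AddCommGroup V] [Module R V]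
  {d : V →ₗ[R] V} {z : V} {w : V →ₗ[R] R} {D : R × V × R →ₗ[R] R × V × R}

theorem comp_self_eq_zero (hD : ∀ a v b, D (a, v, b) = (0, a • z + d v, w v))
    (hdd : d ∘ₗ d = 0) (hz : d z = 0) (hwd : w ∘ₗ d = 0) (hwz : w z = 0) : D ∘ₗ D = 0 := by
  refine LinearMap.ext fun ⟨a, v, b⟩ ↦ ?_
  have hddv : d (d v) = 0 := LinearMap.congr_fun hdd v
  have hwdv : w (d v) = 0 := LinearMap.congr_fun hwd v
  simp [hD, hz, hwz, hddv, hwdv]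

theorem range_eq_prod (hD : ∀ a v b, D (a, v, b) = (0, a • z + d v, w v))
    {v₀ : V} (hdv₀ : d v₀ = 0) (hwv₀ : w v₀ = 1) :
    range D = (⊥ : Submodule R R).prod ((R ∙ z ⊔ range d).prod ⊤) := by
  ext ⟨a, m, c⟩
  simp only [mem_range, Prod.exists, hD, mem_prod, mem_bot, mem_top, and_true,
    mem_sup, mem_span_singleton]
  constructor
  · rintro ⟨b, u, -, h⟩
    simp only [Prod.mk.injEq] at h
    obtain ⟨rfl, rfl, rfl⟩ := h
    exact ⟨rfl, _, ⟨b, rfl⟩, _, ⟨u, rfl⟩, rfl⟩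
  · rintro ⟨rfl, _, ⟨b, rfl⟩, _, ⟨u, rfl⟩, rfl⟩
    refine ⟨b, u + (c - w u) • v₀, 0, ?_⟩
    simp [hdv₀, hwv₀]

end

theorem finrank_range {R V : Type*} [CommRing R] [IsDomain R] [IsNoetherianRing R]
    [AddCommGroup V] [Module R V] [Module.Finite R V] {d : V →ₗ[R] V} {z : V} {w : V →ₗ[R] R}
    {D : R × V × R →ₗ[R] R × V × R} (hD : ∀ a v b, D (a, v, b) = (0, a • z + d v, w v))
    (hz : ∀ a : R, a ≠ 0 → a • z ∉ range d) (hsurj : ∃ v, d v = 0 ∧ w v = 1) :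
    finrank R (range D) = finrank R (range d) + 2 := by
  obtain ⟨v₀, hdv₀, hwv₀⟩ := hsurj
  rw [range_eq_prod hD hdv₀ hwv₀, Submodule.finrank_prod, Submodule.finrank_prod, finrank_bot,
    finrank_top, finrank_self, finrank_span_singleton_sup hz, zero_add]

end MappingCone

theorem stmt0_general (V : Type*) [AddCommGroup V] [Module ℤ V]
    [Module.Finite ℤ V]
    (d : V →ₗ[ℤ] V) (hdd : d ∘ₗ d = 0)
    (z : V) (hz : d z = 0)
    (hzinj : ∀ a : ℤ, a ≠ 0 → a • z ∉ LinearMap.range d)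
    (w : V →ₗ[ℤ] ℤ) (hwd : w ∘ₗ d = 0) (hwz : w z = 0)
    (hsurj : ∃ v : V, d v = 0 ∧ w v = 1)
    (D : ℤ × V × ℤ →ₗ[ℤ] ℤ × V × ℤ)
    (hD : ∀ (a : ℤ) (v : V) (b : ℤ), D (a, v, b) = (0, a • z + d v, w v)) :
    D ∘ₗ D = 0 ∧
    (Module.finrank ℤ (LinearMap.ker D) : ℤ) - Module.finrank ℤ (LinearMap.range D)
      = ((Module.finrank ℤ (LinearMap.ker d) : ℤ)
          - Module.finrank ℤ (LinearMap.range d)) - 2 := by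
  -- `a • z` in the statement is `zsmul`, not the scalar action of the given `Module ℤ V`.
  obtain rfl : ‹Module ℤ V› = AddCommGroup.toIntModule V := Subsingleton.elim _ _
  refine ⟨MappingCone.comp_self_eq_zero hD hdd hz hwd hwz, ?_⟩
  rw [D.finrank_ker_sub_finrank_range, d.finrank_ker_sub_finrank_range,
    MappingCone.finrank_range hD hzinj hsurj, finrank_prod_of_isDomain, finrank_prod_of_isDomain,
    finrank_self]
  push_cast
  ring

/-- Lemma 3.2 (algebraic content, integral version): given a finitely generated free
abelian group `V` with a differential `d` (`d ∘ d = 0`), a cycle `z` whose homology class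
generates a `ℤ`-summand injectively (no nonzero multiple of `z` is a boundary), and a
linear functional `w` vanishing on boundaries and on `z` which is surjective on homology
(there is a cycle `v` with `w v = 1`), the total complex `T = ℤ × V × ℤ` with differential
`D (a, v, b) = (0, a • z + d v, w v)` satisfies `D ∘ D = 0` and the rank of its homology is
the rank of the homology of `(V, d)` minus `2`. -/
theorem stmt0 (V : Type*) [AddCommGroup V] [Module ℤ V]
    [Module.Free ℤ V] [Module.Finite ℤ V]
    (d : V →ₗ[ℤ] V) (hdd : d ∘ₗ d = 0)
    (z : V) (hz : d z = 0)
    (hzinj : ∀ a : ℤ, a ≠ 0 → a • z ∉ LinearMap.range d)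
    (w : V →ₗ[ℤ] ℤ) (hwd : w ∘ₗ d = 0) (hwz : w z = 0)
    (hsurj : ∃ v : V, d v = 0 ∧ w v = 1)
    (D : ℤ × V × ℤ →ₗ[ℤ] ℤ × V × ℤ)
    (hD : ∀ (a : ℤ) (v : V) (b : ℤ), D (a, v, b) = (0, a • z + d v, w v)) :
    D ∘ₗ D = 0 ∧
    (Module.finrank ℤ (LinearMap.ker D) : ℤ) - Module.finrank ℤ (LinearMap.range D)
      = ((Module.finrank ℤ (LinearMap.ker d) : ℤ)
          - Module.finrank ℤ (LinearMap.range d)) - 2 :=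
  stmt0_general V d hdd z hz hzinj w hwd hwz hsurj D hD
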